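/- The Mostar index of the Lucas cube Λ_n equals n * f_n * f_{n-1} for n ≥ 2. -/

import Mathlib

open Finset

def noConsecCyc (n : ℕ) (b : Fin n → Bool) : Prop :=
  ∀ i j : Fin n, (j : ℕ) = ((i : ℕ) + 1) % n → ¬(b i = true ∧ b j = true)

instance (n : ℕ) : DecidablePred (noConsecCyc n) := fun _ => by
  unfold noConsecCyc; infer_instance

def LucasVertex (n : ℕ) := {b : Fin n → Bool // noConsecCyc n b}

instance (n : ℕ) : Fintype (LucasVertex n) := Subtype.fintype _

def closer (n : ℕ) (u v : LucasVertex n) : ℕ :=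
  ((univ : Finset (LucasVertex n)).filter
    (fun w => hammingDist w.1 u.1 < hammingDist w.1 v.1)).card


/-- "path" condition: no two consecutive ones (non-cyclic). -/
def okP (m : ℕ) (b : Fin m → Bool) : Prop :=
  ∀ i j : Fin m, (j : ℕ) = (i : ℕ) + 1 → ¬(b i = true ∧ b j = true)

instance (m : ℕ) : DecidablePred (okP m) := fun _ => by unfold okP; infer_instance

def cntP (m : ℕ) : ℕ := ((univ : Finset (Fin m → Bool)).filter (okP m)).card

lemma okP_cons_false {m : ℕ} (t : Fin m → Bool) :
    okP (m+1) (Fin.cons false t) ↔ okP m t := by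
  constructor
  · intro h i j hij
    have := h i.succ j.succ (by simp [Fin.val_succ, hij])
    simpa using this
  · intro h i j hij
    rcases Fin.eq_zero_or_eq_succ j with rfl | ⟨j', rfl⟩
    · simp at hij
    rcases Fin.eq_zero_or_eq_succ i with rfl | ⟨i', rfl⟩
    · simp
    · simp only [Fin.cons_succ]
      exact h i' j' (by simpa [Fin.val_succ] using hij)

lemma okP_cons_true {m : ℕ} (t : Fin (m+1) → Bool) :
    okP (m+2) (Fin.cons true t) ↔ okP (m+1) t ∧ t 0 = false := by
  constructor
  · intro h
    constructor
    · intro i j hij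
      have := h i.succ j.succ (by simp [Fin.val_succ, hij])
      simpa using this
    · have := h 0 (Fin.succ 0) (by simp)
      simp at this
      simpa using this
  · rintro ⟨h, h0⟩ i j hij
    rcases Fin.eq_zero_or_eq_succ j with rfl | ⟨j', rfl⟩
    · simp at hij
    rcases Fin.eq_zero_or_eq_succ i with rfl | ⟨i', rfl⟩
    · have : j' = 0 := by
        have : (j' : ℕ) = 0 := by simpa [Fin.val_succ] using hij
        exact Fin.ext this
      subst this
      simp [h0]
    · simp only [Fin.cons_succ]
      exact h i' j' (by simpa [Fin.val_succ] using hij)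

lemma cntP_zero : cntP 0 = 1 := by decide
lemma cntP_one : cntP 1 = 2 := by decide

/-- count with first bit false equals cntP m -/
lemma card_false_eq (m : ℕ) :
    ((univ : Finset (Fin (m+1) → Bool)).filter (fun b => okP (m+1) b ∧ b 0 = false)).card
      = cntP m := by
  apply Finset.card_nbij' (fun b => Fin.tail b) (fun t => Fin.cons false t)
  · intro b hb
    simp only [Finset.mem_coe, mem_filter, mem_univ, true_and] at hb ⊢
    have : b = Fin.cons false (Fin.tail b) := by
      rw [← hb.2]; exact (Fin.cons_self_tail b).symm
    rw [this] at hb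
    exact (okP_cons_false _).1 hb.1
  · intro t ht
    simp only [Finset.mem_coe, mem_filter, mem_univ, true_and] at ht ⊢
    exact ⟨(okP_cons_false t).2 ht, rfl⟩
  · intro b hb
    simp only [Finset.mem_coe, mem_filter, mem_univ, true_and] at hb
    rw [← hb.2]
    exact Fin.cons_self_tail b
  · intro t _
    simp

lemma card_true_eq (m : ℕ) :
    ((univ : Finset (Fin (m+2) → Bool)).filter (fun b => okP (m+2) b ∧ b 0 = true)).card
      = ((univ : Finset (Fin (m+1) → Bool)).filter (fun t => okP (m+1) t ∧ t 0 = false)).card := by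
  apply Finset.card_nbij' (fun b => Fin.tail b) (fun t => Fin.cons true t)
  · intro b hb
    simp only [Finset.mem_coe, mem_filter, mem_univ, true_and] at hb ⊢
    have hc : b = Fin.cons true (Fin.tail b) := by
      rw [← hb.2]; exact (Fin.cons_self_tail b).symm
    rw [hc] at hb
    have := (okP_cons_true _).1 hb.1
    exact ⟨this.1, this.2⟩
  · intro t ht
    simp only [Finset.mem_coe, mem_filter, mem_univ, true_and] at ht ⊢
    exact ⟨(okP_cons_true t).2 ht, rfl⟩
  · intro b hb
    simp only [Finset.mem_coe, mem_filter, mem_univ, true_and] at hb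
    rw [← hb.2]
    exact Fin.cons_self_tail b
  · intro t _
    simp

lemma cntP_split (m : ℕ) :
    cntP (m+1) = ((univ : Finset (Fin (m+1) → Bool)).filter (fun b => okP (m+1) b ∧ b 0 = false)).card
      + ((univ : Finset (Fin (m+1) → Bool)).filter (fun b => okP (m+1) b ∧ b 0 = true)).card := by
  unfold cntP
  have := Finset.card_filter_add_card_filter_not
    (s := (univ : Finset (Fin (m+1) → Bool)).filter (okP (m+1))) (p := fun b => b 0 = false)
  rw [Finset.filter_filter, Finset.filter_filter] at this
  rw [← this]
  congr 2
  ext b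
  simp

lemma cntP_succ_succ (m : ℕ) : cntP (m+2) = cntP (m+1) + cntP m := by
  rw [cntP_split (m+1), card_true_eq m, card_false_eq (m+1), card_false_eq m]

lemma cntP_eq_fib (m : ℕ) : cntP m = Nat.fib (m+2) := by
  induction m using Nat.strong_induction_on with
  | _ m ih =>
    match m with
    | 0 => simpa using cntP_zero
    | 1 => simpa [show Nat.fib 3 = 2 from rfl] using cntP_one
    | (k+2) =>
      rw [cntP_succ_succ, ih (k+1) (by omega), ih k (by omega)]
      rw [Nat.fib_add_two (n := k+2)]
      ring_nf


instance (n : ℕ) : DecidableEq (LucasVertex n) := fun a b =>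
  decidable_of_iff (a.1 = b.1) Subtype.ext_iff.symm

/-- cons-false preserves/reflects the cyclic condition (n = m+1, m ≥ 1). -/
lemma noConsecCyc_cons_false {m : ℕ} (t : Fin m → Bool) :
    noConsecCyc (m+1) (Fin.cons false t) ↔ okP m t := by
  constructor
  · intro h i j hij
    have hjv : (i:ℕ) + 1 < m := by omega
    have := h i.succ j.succ (by
      simp only [Fin.val_succ]
      rw [Nat.mod_eq_of_lt (by omega)]
      omega)
    simpa using this
  · intro h i j hij
    rcases Fin.eq_zero_or_eq_succ i with rfl | ⟨i', rfl⟩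
    · simp
    rcases Fin.eq_zero_or_eq_succ j with rfl | ⟨j', rfl⟩
    · simp
    simp only [Fin.cons_succ]
    apply h i' j'
    have hi' : (i' : ℕ) < m := i'.isLt
    have hj' : (j' : ℕ) < m := j'.isLt
    simp only [Fin.val_succ] at hij
    rcases Nat.lt_or_ge ((i':ℕ) + 1 + 1) (m+1) with hlt | hge
    · rw [Nat.mod_eq_of_lt hlt] at hij; omega
    · -- wraparound: j.succ = 0 impossible since j' + 1 ≥ 1
      have : (i':ℕ) + 1 + 1 = m + 1 := by omega
      rw [this, Nat.mod_self] at hij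
      omega

/-- the canonical Lucas string with first bit true, built from a path string -/
def buildT (m : ℕ) (t : Fin m → Bool) : Fin (m+3) → Bool :=
  fun i => if h : 2 ≤ (i:ℕ) ∧ (i:ℕ) ≤ m+1 then t ⟨(i:ℕ)-2, by omega⟩
           else decide ((i:ℕ) = 0)

lemma buildT_mid {m : ℕ} (t : Fin m → Bool) (i : Fin (m+3)) (h : 2 ≤ (i:ℕ) ∧ (i:ℕ) ≤ m+1) :
    buildT m t i = t ⟨(i:ℕ)-2, by omega⟩ := by
  simp only [buildT, dif_pos h]

lemma buildT_out {m : ℕ} (t : Fin m → Bool) (i : Fin (m+3)) (h : ¬(2 ≤ (i:ℕ) ∧ (i:ℕ) ≤ m+1)) :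
    buildT m t i = decide ((i:ℕ) = 0) := by
  simp only [buildT, dif_neg h]

lemma buildT_at_plus2 {m : ℕ} (t : Fin m → Bool) (a : Fin m) :
    buildT m t ⟨(a:ℕ)+2, by omega⟩ = t a := by
  rw [buildT_mid t ⟨(a:ℕ)+2, by omega⟩ (show 2 ≤ (a:ℕ)+2 ∧ (a:ℕ)+2 ≤ m+1 from ⟨by omega, by omega⟩)]
  congr 1

lemma noConsecCyc_buildT {m : ℕ} (t : Fin m → Bool) :
    noConsecCyc (m+3) (buildT m t) ↔ okP m t := by
  constructor
  · intro h a b hab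
    have hb2 : (b:ℕ) < m := b.isLt
    have key := h ⟨(a:ℕ)+2, by omega⟩ ⟨(b:ℕ)+2, by omega⟩ (by
      show (b:ℕ)+2 = ((a:ℕ)+2+1) % (m+3)
      rw [Nat.mod_eq_of_lt (by omega)]
      omega)
    rw [buildT_at_plus2, buildT_at_plus2] at key
    exact key
  · intro h i j hij
    by_cases hi : 2 ≤ (i:ℕ) ∧ (i:ℕ) ≤ m+1
    · rw [buildT_mid t i hi]
      by_cases hi2 : (i:ℕ) ≤ m
      · -- j = i+1, still in middle zone
        have hjv : (j:ℕ) = (i:ℕ)+1 := by rw [Nat.mod_eq_of_lt (by omega)] at hij; exact hij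
        rw [buildT_mid t j (by omega)]
        intro ⟨h1, h2⟩
        exact h ⟨(i:ℕ)-2, by omega⟩ ⟨(j:ℕ)-2, by omega⟩ (by simp; omega) ⟨h1, h2⟩
      · -- i = m+1, j = m+2, buildT j = false
        have hjv : (j:ℕ) = (i:ℕ)+1 := by rw [Nat.mod_eq_of_lt (by omega)] at hij; exact hij
        rw [buildT_out t j (by omega)]
        intro ⟨_, h2⟩
        simp only [decide_eq_true_eq] at h2
        omega
    · rw [buildT_out t i hi]
      by_cases hi0 : (i:ℕ) = 0
      · -- j = 1, buildT j = false
        have hjv : (j:ℕ) = 1 := by rw [hi0] at hij; rw [Nat.mod_eq_of_lt (by omega)] at hij; exact hij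
        rw [buildT_out t j (by omega)]
        intro ⟨_, h2⟩
        simp only [decide_eq_true_eq] at h2
        omega
      · -- i = m+2: buildT i = false
        intro ⟨h1, _⟩
        simp only [decide_eq_true_eq] at h1
        omega

lemma eq_buildT {m : ℕ} {w : Fin (m+3) → Bool} (hw : noConsecCyc (m+3) w) (h0 : w 0 = true) :
    w = buildT m (fun a => w ⟨(a:ℕ)+2, by omega⟩) := by
  funext i
  by_cases hi : 2 ≤ (i:ℕ) ∧ (i:ℕ) ≤ m+1
  · rw [buildT_mid _ i hi]
    congr 1
    apply Fin.ext
    simp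
    omega
  · rw [buildT_out _ i hi]
    by_cases hi0 : (i:ℕ) = 0
    · have : i = 0 := Fin.ext hi0
      rw [this, h0]
      simp [hi0]
    · -- i = 1 or i = m+2; in both cases w i = false
      have hiv : (i:ℕ) = 1 ∨ (i:ℕ) = m+2 := by omega
      have hwf : w i = false := by
        rcases hiv with h1 | h1
        · have := hw 0 i (by
            show (i:ℕ) = ((0:Fin (m+3)):ℕ).succ % (m+3)
            rw [Fin.val_zero]
            rw [Nat.mod_eq_of_lt (by omega)]
            exact h1)
          rw [h0] at this
          simp at this
          exact this
        · have := hw i 0 (by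
            show ((0:Fin (m+3)):ℕ) = ((i:ℕ)+1) % (m+3)
            rw [Fin.val_zero, h1]
            simp)
          rw [h0] at this
          simpa using this
      rw [hwf]
      simp [hi0]

def cntAt (n : ℕ) (i : Fin n) (p : Bool) : ℕ :=
  ((univ : Finset (LucasVertex n)).filter (fun w => w.1 i = p)).card

lemma cntAt_zero_false (m : ℕ) : cntAt (m+1) 0 false = cntP m := by
  unfold cntAt cntP
  apply Finset.card_bij' (i := fun (w : LucasVertex (m+1)) _ => (fun a : Fin m => w.1 a.succ))
    (j := fun t ht => (⟨Fin.cons false t,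
      (noConsecCyc_cons_false t).2 (by simpa using ht)⟩ : LucasVertex (m+1)))
  case hi =>
    intro w hw
    simp only [mem_filter, mem_univ, true_and] at hw ⊢
    have hc : w.1 = Fin.cons false (fun a => w.1 a.succ) := by
      funext x
      rcases Fin.eq_zero_or_eq_succ x with rfl | ⟨x', rfl⟩
      · simpa using hw
      · simp
    have h2 := w.2
    rw [hc] at h2
    exact (noConsecCyc_cons_false _).1 h2
  case hj =>
    intro t ht
    exact Finset.mem_filter.2 ⟨mem_univ _, rfl⟩
  case left_inv =>
    intro w hw
    simp only [mem_filter, mem_univ, true_and] at hw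
    apply Subtype.ext
    show Fin.cons false (fun a => w.1 a.succ) = w.1
    funext x
    rcases Fin.eq_zero_or_eq_succ x with rfl | ⟨x', rfl⟩
    · simpa using hw.symm
    · simp
  case right_inv =>
    intro t ht
    funext a
    simp

lemma cntAt_zero_true (m : ℕ) : cntAt (m+3) 0 true = cntP m := by
  unfold cntAt cntP
  apply Finset.card_bij' (i := fun (w : LucasVertex (m+3)) _ => (fun a : Fin m => w.1 ⟨(a:ℕ)+2, by omega⟩))
    (j := fun t ht => (⟨buildT m t, (noConsecCyc_buildT t).2 (by simpa using ht)⟩ : LucasVertex (m+3)))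
  case hi =>
    intro w hw
    simp only [mem_filter, mem_univ, true_and] at hw ⊢
    have hc := eq_buildT w.2 hw
    have h2 := w.2
    rw [hc] at h2
    exact (noConsecCyc_buildT _).1 h2
  case hj =>
    intro t ht
    refine Finset.mem_filter.2 ⟨mem_univ _, ?_⟩
    show buildT m t 0 = true
    rw [buildT_out t 0 (by simp)]
    simp
  case left_inv =>
    intro w hw
    simp only [mem_filter, mem_univ, true_and] at hw
    exact Subtype.ext (eq_buildT w.2 hw).symm
  case right_inv =>
    intro t ht
    funext a
    exact buildT_at_plus2 t a

lemma noConsecCyc_shift {n : ℕ} (k : Fin n) {b : Fin n → Bool} (hb : noConsecCyc n b) :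
    noConsecCyc n (fun j => b (j + k)) := by
  intro i j hij
  apply hb (i + k) (j + k)
  rw [Fin.val_add, Fin.val_add, hij, Nat.mod_add_mod, Nat.mod_add_mod]
  congr 1
  omega

lemma cntAt_eq {n : ℕ} [NeZero n] (i : Fin n) (p : Bool) : cntAt n i p = cntAt n 0 p := by
  unfold cntAt
  apply Finset.card_bij' (i := fun (w : LucasVertex n) _ => (⟨fun j => w.1 (j + i), noConsecCyc_shift i w.2⟩ : LucasVertex n))
    (j := fun (w : LucasVertex n) _ => (⟨fun j => w.1 (j - i), by
      have : (fun j : Fin n => w.1 (j - i)) = (fun j => w.1 (j + (-i))) := by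
        funext j; rw [sub_eq_add_neg]
      rw [this]; exact noConsecCyc_shift (-i) w.2⟩ : LucasVertex n))
  case hi =>
    intro w hw
    simp only [mem_filter, mem_univ, true_and] at hw ⊢
    refine Finset.mem_filter.2 ⟨mem_univ _, ?_⟩
    show w.1 (0 + i) = p
    rw [zero_add]
    exact hw
  case hj =>
    intro w hw
    refine Finset.mem_filter.2 ⟨mem_univ _, ?_⟩
    have hw := (Finset.mem_filter.1 hw).2
    show w.1 (i - i) = p
    rw [sub_self]
    exact hw
  case left_inv =>
    intro w hw
    apply Subtype.ext
    funext j
    show w.1 ((j - i) + i) = w.1 j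
    rw [sub_add_cancel]
  case right_inv =>
    intro w hw
    apply Subtype.ext
    funext j
    show w.1 ((j + i) - i) = w.1 j
    rw [add_sub_cancel_right]

lemma cntAt2 : cntAt 2 0 true = Nat.fib (2-1) := by decide

lemma cntAt_true {n : ℕ} (hn : 2 ≤ n) [NeZero n] (i : Fin n) :
    cntAt n i true = Nat.fib (n-1) := by
  rw [cntAt_eq]
  rcases Nat.lt_or_ge n 3 with h3 | h3
  · have h2 : n = 2 := by omega
    subst h2
    exact cntAt2
  · obtain ⟨m, rfl⟩ : ∃ m, n = m + 3 := ⟨n - 3, by omega⟩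
    rw [cntAt_zero_true, cntP_eq_fib]
    congr 1

lemma cntAt_false {n : ℕ} (hn : 2 ≤ n) [NeZero n] (i : Fin n) :
    cntAt n i false = Nat.fib (n+1) := by
  rw [cntAt_eq]
  obtain ⟨m, rfl⟩ : ∃ m, n = m + 1 := ⟨n - 1, by omega⟩
  rw [cntAt_zero_false, cntP_eq_fib]


def dE (n : ℕ) (i : Fin n) (u v : LucasVertex n) : Prop :=
  u.1 i ≠ v.1 i ∧ ∀ j, j ≠ i → u.1 j = v.1 j

instance (n : ℕ) (i : Fin n) (u v : LucasVertex n) : Decidable (dE n i u v) := by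
  unfold dE; infer_instance

lemma noConsecCyc_mono {n : ℕ} {b c : Fin n → Bool} (h : ∀ j, c j = true → b j = true)
    (hb : noConsecCyc n b) : noConsecCyc n c :=
  fun i j hij hc => hb i j hij ⟨h i hc.1, h j hc.2⟩

lemma dist_eq_one_iff {n : ℕ} (u v : LucasVertex n) :
    hammingDist u.1 v.1 = 1 ↔ ∃ i, dE n i u v := by
  rw [hammingDist, Finset.card_eq_one]
  constructor
  · rintro ⟨i, hi⟩
    refine ⟨i, ?_, ?_⟩
    · have : i ∈ ({i} : Finset (Fin n)) := mem_singleton_self i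
      rw [← hi] at this
      simpa using this
    · intro j hj
      by_contra hne
      have : j ∈ ({i} : Finset (Fin n)) := by
        rw [← hi]; simp [hne]
      simp at this
      exact hj this
  · rintro ⟨i, h1, h2⟩
    refine ⟨i, ?_⟩
    ext j
    simp only [mem_filter, mem_univ, true_and, mem_singleton]
    constructor
    · intro hj
      by_contra hne
      exact hj (h2 j hne)
    · rintro rfl
      exact h1

lemma dE_unique {n : ℕ} {i i' : Fin n} {u v : LucasVertex n}
    (h : dE n i u v) (h' : dE n i' u v) : i = i' := by
  by_contra hne
  exact h.1 (h'.2 i hne)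

lemma closer_eq {n : ℕ} (u v : LucasVertex n) (i : Fin n)
    (h1 : u.1 i ≠ v.1 i) (h2 : ∀ j, j ≠ i → u.1 j = v.1 j) :
    closer n u v = cntAt n i (u.1 i) := by
  unfold closer cntAt
  congr 1
  apply Finset.filter_congr
  intro w _
  have key : ∀ (x : LucasVertex n), hammingDist w.1 x.1 =
      (∑ j ∈ univ.erase i, if w.1 j ≠ x.1 j then 1 else 0) + (if w.1 i ≠ x.1 i then 1 else 0) := by
    intro x
    rw [hammingDist, Finset.card_filter, ← Finset.sum_erase_add _ _ (mem_univ i)]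
  have hS : (∑ j ∈ univ.erase i, if w.1 j ≠ u.1 j then 1 else 0) =
      (∑ j ∈ univ.erase i, if w.1 j ≠ v.1 j then 1 else 0) := by
    apply Finset.sum_congr rfl
    intro j hj
    rw [h2 j (Finset.ne_of_mem_erase hj)]
  rw [key u, key v, hS]
  by_cases hw : w.1 i = u.1 i
  · have hwv : w.1 i ≠ v.1 i := by rw [hw]; exact h1
    rw [if_neg (by simpa using hw), if_pos hwv]
    simp [hw]
  · have hwv : w.1 i = v.1 i := by
      cases hb : w.1 i <;> cases hc : u.1 i <;> cases hd : v.1 i <;> simp_all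
    rw [if_pos hw, if_neg (by simpa using hwv)]
    simp [hw]

lemma dE_iff_update {n : ℕ} (i : Fin n) (u v : LucasVertex n) :
    dE n i u v ↔ v.1 = Function.update u.1 i (!(u.1 i)) := by
  constructor
  · rintro ⟨h1, h2⟩
    funext j
    by_cases hj : j = i
    · subst hj
      rw [Function.update_self]
      cases hb : u.1 j <;> cases hc : v.1 j <;> simp_all
    · rw [Function.update_of_ne hj, h2 j hj]
  · intro h
    constructor
    · rw [h, Function.update_self]
      cases u.1 i <;> simp
    · intro j hj
      rw [h, Function.update_of_ne hj]

lemma inner_v {n : ℕ} (i : Fin n) (u : LucasVertex n) :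
    (∑ v : LucasVertex n, if dE n i u v then (1:ℤ) else 0) =
      if noConsecCyc n (Function.update u.1 i (!(u.1 i))) then 1 else 0 := by
  by_cases h : noConsecCyc n (Function.update u.1 i (!(u.1 i)))
  · rw [if_pos h]
    have : ∀ v : LucasVertex n, dE n i u v ↔ v = ⟨_, h⟩ := by
      intro v
      rw [dE_iff_update]
      exact ⟨fun hh => Subtype.ext hh, fun hh => by rw [hh]⟩
    rw [Finset.sum_eq_single_of_mem ⟨_, h⟩ (mem_univ _)
      (fun v _ hv => if_neg (fun hd => hv ((this v).1 hd))), if_pos ((this _).2 rfl)]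
  · rw [if_neg h]
    apply Finset.sum_eq_zero
    intro v _
    rw [if_neg]
    intro hd
    exact h (((dE_iff_update i u v).1 hd) ▸ v.2)

lemma inner_u {n : ℕ} (hn : 2 ≤ n) [NeZero n] (i : Fin n) :
    (∑ u : LucasVertex n, if noConsecCyc n (Function.update u.1 i (!(u.1 i))) then (1:ℤ) else 0) =
      2 * Nat.fib (n-1) := by
  rw [Finset.sum_boole]
  have hsplit := Finset.card_filter_add_card_filter_not
    (s := (univ : Finset (LucasVertex n)).filter
      (fun u => noConsecCyc n (Function.update u.1 i (!(u.1 i)))))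
    (p := fun u => u.1 i = true)
  rw [Finset.filter_filter, Finset.filter_filter] at hsplit
  have hT : ((univ : Finset (LucasVertex n)).filter
      (fun u => noConsecCyc n (Function.update u.1 i (!(u.1 i))) ∧ u.1 i = true)).card
      = cntAt n i true := by
    unfold cntAt
    congr 1
    apply Finset.filter_congr
    intro u _
    constructor
    · exact fun h => h.2
    · intro h
      refine ⟨?_, h⟩
      apply noConsecCyc_mono _ u.2
      intro j hj
      by_cases hji : j = i
      · subst hji
        rw [Function.update_self] at hj
        rw [h] at hj
        simp at hj
      · rwa [Function.update_of_ne hji] at hj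
  have hF : ((univ : Finset (LucasVertex n)).filter
      (fun u => noConsecCyc n (Function.update u.1 i (!(u.1 i))) ∧ ¬(u.1 i = true))).card
      = cntAt n i true := by
    unfold cntAt
    apply Finset.card_bij'
      (i := fun u hu => (⟨Function.update u.1 i true, by
        have hu : noConsecCyc n (Function.update u.1 i (!(u.1 i))) ∧ u.1 i = false :=
          (Finset.mem_filter.1 hu).2.imp id (by simp)
        have := hu.1
        rwa [hu.2] at this⟩ : LucasVertex n))
      (j := fun w hw => (⟨Function.update w.1 i false, by
        apply noConsecCyc_mono _ w.2
        intro j hj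
        by_cases hji : j = i
        · subst hji; rw [Function.update_self] at hj; simp at hj
        · rwa [Function.update_of_ne hji] at hj⟩ : LucasVertex n))
    case hi =>
      intro u hu
      refine Finset.mem_filter.2 ⟨mem_univ _, ?_⟩
      exact Function.update_self i true u.1
    case hj =>
      intro w hw
      have hw := (Finset.mem_filter.1 hw).2
      refine Finset.mem_filter.2 ⟨mem_univ _, ?_⟩
      constructor
      · show noConsecCyc n (Function.update (Function.update w.1 i false) i
          (!(Function.update w.1 i false i)))
        rw [Function.update_self, Function.update_idem]
        simp only [Bool.not_false]
        rw [← hw, Function.update_eq_self]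
        exact w.2
      · exact Bool.eq_false_iff.1 (Function.update_self i false w.1)
    case left_inv =>
      intro u hu
      have hu : noConsecCyc n (Function.update u.1 i (!(u.1 i))) ∧ u.1 i = false :=
        (Finset.mem_filter.1 hu).2.imp id (by simp)
      apply Subtype.ext
      show Function.update (Function.update u.1 i true) i false = u.1
      rw [Function.update_idem, ← hu.2, Function.update_eq_self]
    case right_inv =>
      intro w hw
      have hw := (Finset.mem_filter.1 hw).2
      apply Subtype.ext
      show Function.update (Function.update w.1 i false) i true = w.1
      rw [Function.update_idem, ← hw, Function.update_eq_self]
  rw [hT, hF, cntAt_true hn i] at hsplit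
  rw [← hsplit]
  push_cast
  ring

lemma term_eq {n : ℕ} (hn : 2 ≤ n) [NeZero n] (u v : LucasVertex n) :
    (if hammingDist u.1 v.1 = 1 then |(closer n u v : ℤ) - (closer n v u : ℤ)| else 0)
      = (Nat.fib n : ℤ) * ∑ i : Fin n, (if dE n i u v then (1:ℤ) else 0) := by
  by_cases h : hammingDist u.1 v.1 = 1
  · obtain ⟨i, hi⟩ := (dist_eq_one_iff u v).1 h
    rw [if_pos h]
    have hsum : (∑ i' : Fin n, if dE n i' u v then (1:ℤ) else 0) = 1 := by
      rw [Finset.sum_eq_single i]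
      · rw [if_pos hi]
      · intro b _ hb
        rw [if_neg]
        intro hd
        exact hb (dE_unique hd hi)
      · intro hmem
        exact absurd (mem_univ i) hmem
    rw [hsum, mul_one]
    have hc1 : closer n u v = cntAt n i (u.1 i) := closer_eq u v i hi.1 hi.2
    have hc2 : closer n v u = cntAt n i (v.1 i) :=
      closer_eq v u i (Ne.symm hi.1) (fun j hj => (hi.2 j hj).symm)
    have hfib : Nat.fib (n+1) = Nat.fib n + Nat.fib (n-1) := by
      obtain ⟨m, rfl⟩ : ∃ m, n = m+2 := ⟨n-2, by omega⟩
      show Nat.fib (m+1+2) = Nat.fib (m+1+1) + Nat.fib (m+1)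
      rw [Nat.fib_add_two]
      exact Nat.add_comm _ _
    cases hu : u.1 i
    · have hv : v.1 i = true := by
        cases hv : v.1 i
        · exact absurd (hu.trans hv.symm) hi.1
        · rfl
      rw [hc1, hc2, hu, hv, cntAt_true hn i, cntAt_false hn i]
      rw [show ((Nat.fib (n+1):ℤ) - (Nat.fib (n-1):ℤ)) = (Nat.fib n : ℤ) from by
        rw [show ((Nat.fib (n+1):ℤ)) = (Nat.fib n : ℤ) + (Nat.fib (n-1) : ℤ) from by
          exact_mod_cast hfib]
        ring]
      exact abs_of_nonneg (by positivity)
    · have hv : v.1 i = false := by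
        cases hv : v.1 i
        · rfl
        · exact absurd (hu.trans hv.symm) hi.1
      rw [hc1, hc2, hu, hv, cntAt_true hn i, cntAt_false hn i]
      rw [show ((Nat.fib (n-1):ℤ) - (Nat.fib (n+1):ℤ)) = -(Nat.fib n : ℤ) from by
        rw [show ((Nat.fib (n+1):ℤ)) = (Nat.fib n : ℤ) + (Nat.fib (n-1) : ℤ) from by
          exact_mod_cast hfib]
        ring]
      rw [abs_neg]
      exact abs_of_nonneg (by positivity)
  · rw [if_neg h]
    have hno : ∀ i, ¬ dE n i u v := fun i hd => h ((dist_eq_one_iff u v).2 ⟨i, hd⟩)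
    simp [hno]

/-- The Mostar index of Λ_n equals n·f_n·f_{n-1}: each edge (pairs at Hamming distance 1)
appears twice in the ordered double sum, hence the factor 2 on the right-hand side. -/
theorem mostar_lucas_cube (n : ℕ) (hn : 2 ≤ n) :
    ∑ u : LucasVertex n, ∑ v : LucasVertex n,
      (if hammingDist u.1 v.1 = 1 then
        |(closer n u v : ℤ) - (closer n v u : ℤ)| else 0) =
      2 * (n * Nat.fib n * Nat.fib (n - 1) : ℤ) := by
  haveI : NeZero n := ⟨by omega⟩
  calc ∑ u : LucasVertex n, ∑ v : LucasVertex n,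
      (if hammingDist u.1 v.1 = 1 then
        |(closer n u v : ℤ) - (closer n v u : ℤ)| else 0)
      = ∑ u : LucasVertex n, ∑ v : LucasVertex n,
          (Nat.fib n : ℤ) * ∑ i : Fin n, (if dE n i u v then (1:ℤ) else 0) := by
        apply Finset.sum_congr rfl
        intro u _
        apply Finset.sum_congr rfl
        intro v _
        exact term_eq hn u v
    _ = (Nat.fib n : ℤ) * ∑ u : LucasVertex n, ∑ v : LucasVertex n,
          ∑ i : Fin n, (if dE n i u v then (1:ℤ) else 0) := by
        simp only [← Finset.mul_sum]
    _ = (Nat.fib n : ℤ) * ∑ i : Fin n, ∑ u : LucasVertex n, ∑ v : LucasVertex n,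
          (if dE n i u v then (1:ℤ) else 0) := by
        congr 1
        rw [show (∑ u : LucasVertex n, ∑ v : LucasVertex n,
            ∑ i : Fin n, (if dE n i u v then (1:ℤ) else 0))
          = ∑ u : LucasVertex n, ∑ i : Fin n, ∑ v : LucasVertex n,
            (if dE n i u v then (1:ℤ) else 0) from
          Finset.sum_congr rfl (fun u _ => Finset.sum_comm)]
        exact Finset.sum_comm
    _ = (Nat.fib n : ℤ) * ∑ i : Fin n, ∑ u : LucasVertex n,
          (if noConsecCyc n (Function.update u.1 i (!(u.1 i))) then (1:ℤ) else 0) := by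
        congr 1
        apply Finset.sum_congr rfl
        intro i _
        apply Finset.sum_congr rfl
        intro u _
        exact inner_v i u
    _ = (Nat.fib n : ℤ) * ∑ _i : Fin n, (2 * (Nat.fib (n-1) : ℤ)) := by
        congr 1
        apply Finset.sum_congr rfl
        intro i _
        exact inner_u hn i
    _ = 2 * (n * Nat.fib n * Nat.fib (n - 1) : ℤ) := by
        rw [Finset.sum_const, Finset.card_univ, Fintype.card_fin]
        push_cast
        ring
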